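/- arXiv:1008.4739 — 5 statements merged into one kernel-verified Lean document; each statement's English description precedes it below -/
import Mathlib

section
/- Let T be any special Aronszajn tree. Then there exist a set B ⊆ ℝ with no subset homeomorphic to the Cantor space 2^ω and a continuous order preserving map ψ : T → B (continuity with respect to the tree topology) such that for all x, y ∈ T, if x↓ ≠ y↓ then ψ(x) ≠ ψ(y). In particular, ψ is injective whenever T is Hausdorff in the tree topology. -/
/-- A tree: a type `T` with a strict partial order `lt` such that for each `x`,
the set of predecessors of `x` is well-ordered by `lt`. -/
structure TreeOrder (T : Type) where
  lt : T → T → Prop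
  trans : ∀ {x y z : T}, lt x y → lt y z → lt x z
  irrefl : ∀ x : T, ¬ lt x x
  wellOrdered : ∀ x : T, IsWellOrder {y : T // lt y x} fun a b => lt a.1 b.1

namespace TreeOrder

variable {T : Type} (S : TreeOrder T)

/-- `x↓`, the set of predecessors of `x`. -/
def below (x : T) : Set T := {y | S.lt y x}

/-- `x↑`, the set of elements above `x`. -/
def above (x : T) : Set T := {y | S.lt x y}

/-- The height of a node: the order type of `x↓`. -/
noncomputable def height (x : T) : Ordinal :=
  @Ordinal.type {y : T // S.lt y x} (fun a b => S.lt a.1 b.1) (S.wellOrdered x)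

/-- The `α`-th level `L_α(T)`. -/
def level (α : Ordinal) : Set T := {x | S.height x = α}

/-- A set `U` is open in the tree topology iff for every `y ∈ U` of limit height
there is `x ◁ y` with `x↑ ∩ y↓ ⊆ U`. -/
def TreeOpen (U : Set T) : Prop :=
  ∀ y ∈ U, Order.IsSuccLimit (S.height y) →
    ∃ x, S.lt x y ∧ ∀ z, S.lt x z → S.lt z y → z ∈ U

/-- Continuity with respect to the tree topology on `T`:
preimages of open sets are open in the tree topology. -/
def TContinuous {B : Type} [TopologicalSpace B] (ψ : T → B) : Prop :=
  ∀ V : Set B, IsOpen V → S.TreeOpen (ψ ⁻¹' V)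

/-- `A ⊆ T` is discrete in the tree topology: every point of `A` is isolated in `A`. -/
def TDiscrete (A : Set T) : Prop :=
  ∀ a ∈ A, ∃ U : Set T, S.TreeOpen U ∧ a ∈ U ∧ U ∩ A = {a}

/-- `T` is an `ω₁`-tree: it has cardinality `ℵ₁`, all levels are countable, and
the level `ω₁` is empty. -/
def IsOmega1Tree : Prop :=
  Cardinal.mk T = Cardinal.aleph 1 ∧
  (∀ α : Ordinal, (S.level α).Countable) ∧
  S.level (Cardinal.aleph 1).ord = ∅

/-- An Aronszajn tree is an `ω₁`-tree with no uncountable chains. -/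
def IsAronszajn : Prop :=
  S.IsOmega1Tree ∧ ∀ C : Set T, IsChain S.lt C → C.Countable

/-- A special Aronszajn tree: an Aronszajn tree which is a countable union of antichains. -/
def IsSpecialAronszajn : Prop :=
  S.IsAronszajn ∧
  ∃ A : ℕ → Set T, (∀ n, IsAntichain S.lt (A n)) ∧ (⋃ n, A n) = Set.univ

end TreeOrder

/-- `C` is closed in `κ`: it contains each of its limit points below `κ`. -/
def IsClosedIn (C : Set Ordinal.{0}) (κ : Ordinal.{0}) : Prop :=
  ∀ α < κ, α ≠ 0 → (∀ β < α, ∃ γ ∈ C, β < γ ∧ γ < α) → α ∈ C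

/-- `C` is club in `κ`: closed and unbounded in `κ`. -/
def IsClubIn (C : Set Ordinal.{0}) (κ : Ordinal.{0}) : Prop :=
  IsClosedIn C κ ∧ ∀ α < κ, ∃ β ∈ C, α < β ∧ β < κ

/-- `A` is stationary in `κ`: it meets every club subset of `κ`. -/
def IsStationaryIn (A : Set Ordinal.{0}) (κ : Ordinal.{0}) : Prop :=
  ∀ C : Set Ordinal, IsClubIn C κ → (A ∩ C).Nonempty

/-- A subset of a tree is stationary iff its set of heights is stationary in `ω₁`. -/
def TreeOrder.TStationary {T : Type} (S : TreeOrder T) (A : Set T) : Prop :=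
  IsStationaryIn (S.height '' A) (Cardinal.aleph 1).ord

/-- The pruning `U^p` of `U`: all `x ∈ U` such that `x↑ ∩ U` is stationary. -/
def TreeOrder.prune {T : Type} (S : TreeOrder T) (U : Set T) : Set T :=
  {x | x ∈ U ∧ S.TStationary (S.above x ∩ U)}

/-- The diamond principle `◊`: there is a sequence `⟨A_α : α < ω₁⟩` with `A_α ⊆ α`
such that for every `A ⊆ ω₁`, the set `{α : A ∩ α = A_α}` is stationary in `ω₁`. -/
def DiamondPrinciple : Prop :=
  ∃ A : Ordinal.{0} → Set Ordinal.{0},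
    (∀ α, A α ⊆ Set.Iio α) ∧
    ∀ X : Set Ordinal.{0}, X ⊆ Set.Iio (Cardinal.aleph 1).ord →
      IsStationaryIn {α | X ∩ Set.Iio α = A α} (Cardinal.aleph 1).ord

/-!
Write `T` as a countable union of antichains and refine the antichain index of a node by its
index inside its (countable) level. From these labels one gets a rank `T → ℝ`, taking countably
many values, that strictly increases along `◁` and separates twins (distinct nodes with the
same predecessors); give each rank value a code in `ℕ` and let `ψ x` be the point of the
middle-thirds Cantor set whose digits mark the codes of the predecessors of `x`.
Then `ψ` is strictly increasing; it is continuous at limit nodes because the codes entering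
late along a branch are large; and `ψ x = ψ y` forces `x↓ = y↓`, since otherwise the minimal
nodes of `x↓ \ y↓` and `y↓ \ x↓` would be twins, each of rank at most the other's.
Finally, if `C ⊆ ψ[T]` were compact and uncountable, a pigeonhole argument over `ω₁` repeated
countably often, together with compactness of `C`, would give a node with an infinite
descending chain of predecessors.
-/

open Set
open scoped Ordinal

noncomputable section

def cantorWeight (n : ℕ) : ℝ := 2 * (3 : ℝ)⁻¹ ^ (n + 1)

/-- The point of the middle-thirds Cantor set whose ternary digits are `2` exactly at the
(shifted) positions in `U`. -/
def cantorCode (U : Set ℕ) : ℝ := ∑' n, U.indicator cantorWeight n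

lemma cantorWeight_pos (n : ℕ) : 0 < cantorWeight n := by
  unfold cantorWeight; positivity

lemma tsum_cantorWeight_add (a : ℕ) : ∑' i, cantorWeight (i + a) = (3 : ℝ)⁻¹ ^ a := by
  have h : ∀ i, cantorWeight (i + a) = 2 * (3 : ℝ)⁻¹ ^ (a + 1) * (3 : ℝ)⁻¹ ^ i := by
    intro i; unfold cantorWeight; ring
  simp_rw [h]
  rw [tsum_mul_left, tsum_geometric_of_lt_one (by norm_num) (by norm_num)]
  ring

lemma summable_cantorWeight : Summable cantorWeight := by
  refine ((summable_geometric_of_lt_one (by norm_num : (0 : ℝ) ≤ 3⁻¹) (by norm_num)).mul_left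
    (2 * 3⁻¹)).congr fun n => ?_
  unfold cantorWeight; ring

lemma summable_indicator_cantorWeight (U : Set ℕ) : Summable (U.indicator cantorWeight) :=
  summable_cantorWeight.indicator U

lemma cantorCode_nonneg (U : Set ℕ) : 0 ≤ cantorCode U :=
  tsum_nonneg fun n => indicator_nonneg (fun n _ => (cantorWeight_pos n).le) n

lemma cantorCode_mono {U V : Set ℕ} (h : U ⊆ V) : cantorCode U ≤ cantorCode V :=
  (summable_indicator_cantorWeight U).tsum_le_tsum
    (indicator_le_indicator_of_subset h fun n => (cantorWeight_pos n).le)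
    (summable_indicator_cantorWeight V)

lemma cantorCode_union {U V : Set ℕ} (h : Disjoint U V) :
    cantorCode (U ∪ V) = cantorCode U + cantorCode V := by
  rw [cantorCode, indicator_union_of_disjoint h]
  exact (summable_indicator_cantorWeight U).tsum_add (summable_indicator_cantorWeight V)

lemma cantorCode_singleton (j : ℕ) : cantorCode {j} = cantorWeight j := by
  rw [cantorCode, tsum_eq_single j fun n hn => indicator_of_notMem (s := {j}) hn _]
  exact indicator_of_mem rfl _

lemma cantorCode_Ici (a : ℕ) : cantorCode (Ici a) = (3 : ℝ)⁻¹ ^ a := by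
  rw [cantorCode, ← (summable_indicator_cantorWeight _).sum_add_tsum_nat_add a,
    Finset.sum_eq_zero fun i hi => indicator_of_notMem (by simpa using hi) _]
  have h : ∀ i, (Ici a).indicator cantorWeight (i + a) = cantorWeight (i + a) := fun i =>
    indicator_of_mem (by simp) _
  simp_rw [h]
  rw [zero_add, tsum_cantorWeight_add]

lemma cantorCode_le_of_subset_Ici {U : Set ℕ} {a : ℕ} (h : U ⊆ Ici a) :
    cantorCode U ≤ (3 : ℝ)⁻¹ ^ a :=
  cantorCode_Ici a ▸ cantorCode_mono h

/-- Weight `j` outweighs all later weights together, so the first difference of two sets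
decides the order of their codes. -/
lemma cantorCode_add_le {U V : Set ℕ} {j : ℕ} (hjU : j ∈ U) (hjV : j ∉ V)
    (h : ∀ m < j, m ∈ V → m ∈ U) :
    cantorCode V + (3 : ℝ)⁻¹ ^ (j + 1) ≤ cantorCode U := by
  set P := U ∩ Iio j
  have hV : cantorCode V ≤ cantorCode P + (3 : ℝ)⁻¹ ^ (j + 1) := by
    have hsub : V ⊆ P ∪ Ici (j + 1) := fun m hm => by
      rcases lt_trichotomy m j with hlt | rfl | hgt
      · exact Or.inl ⟨h m hlt hm, hlt⟩
      · exact absurd hm hjV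
      · exact Or.inr hgt
    have hdisj : Disjoint P (Ici (j + 1)) :=
      disjoint_left.2 fun m hm hm' => by
        simp only [P, mem_inter_iff, mem_Iio] at hm
        simp only [mem_Ici] at hm'
        omega
    calc cantorCode V ≤ cantorCode (P ∪ Ici (j + 1)) := cantorCode_mono hsub
      _ = cantorCode P + (3 : ℝ)⁻¹ ^ (j + 1) := by rw [cantorCode_union hdisj, cantorCode_Ici]
  have hU : cantorCode P + cantorWeight j ≤ cantorCode U := by
    rw [← cantorCode_singleton, ← cantorCode_union (by simp [P])]
    exact cantorCode_mono (union_subset inter_subset_left (singleton_subset_iff.2 hjU))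
  have : cantorWeight j = 2 * (3 : ℝ)⁻¹ ^ (j + 1) := rfl
  have : (0 : ℝ) < (3 : ℝ)⁻¹ ^ (j + 1) := by positivity
  linarith

lemma cantorCode_lt_cantorCode {U V : Set ℕ} {j : ℕ} (hjU : j ∈ U) (hjV : j ∉ V)
    (h : ∀ m < j, m ∈ V → m ∈ U) : cantorCode V < cantorCode U :=
  (lt_add_of_pos_right _ (by positivity)).trans_le (cantorCode_add_le hjU hjV h)

lemma pow_le_abs_sub_cantorCode {U V : Set ℕ} {j : ℕ} (hj : ¬(j ∈ U ↔ j ∈ V))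
    (h : ∀ m < j, (m ∈ U ↔ m ∈ V)) :
    (3 : ℝ)⁻¹ ^ (j + 1) ≤ |cantorCode U - cantorCode V| := by
  have : (0 : ℝ) < (3 : ℝ)⁻¹ ^ (j + 1) := by positivity
  by_cases hjU : j ∈ U
  · have := cantorCode_add_le hjU (fun hjV => hj ⟨fun _ => hjV, fun _ => hjU⟩)
      fun m hm => (h m hm).2
    rw [abs_of_nonneg (by linarith)]; linarith
  · have := cantorCode_add_le (U := V) (V := U) (j := j) (by tauto) hjU fun m hm => (h m hm).1
    rw [abs_of_nonpos (by linarith)]; linarith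

lemma mem_iff_mem_of_abs_sub_cantorCode_lt {U V : Set ℕ} {m : ℕ}
    (h : |cantorCode U - cantorCode V| < (3 : ℝ)⁻¹ ^ (m + 1)) : m ∈ U ↔ m ∈ V := by
  classical
  by_contra hm
  have hex : ∃ j, ¬(j ∈ U ↔ j ∈ V) := ⟨m, hm⟩
  have hle := pow_le_abs_sub_cantorCode (Nat.find_spec hex) fun k hk =>
    not_not.1 (Nat.find_min hex hk)
  have : (3 : ℝ)⁻¹ ^ (m + 1) ≤ (3 : ℝ)⁻¹ ^ (Nat.find hex + 1) :=
    pow_le_pow_of_le_one (by norm_num) (by norm_num) (by have := Nat.find_min' hex hm; omega)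
  linarith

lemma cantorCode_injective : Function.Injective cantorCode := fun U V h =>
  ext fun m => mem_iff_mem_of_abs_sub_cantorCode_lt (by rw [h, sub_self, abs_zero]; positivity)

lemma isClosed_inter_image_cantorCode {C : Set ℝ} (hC : IsClosed C)
    (hCΘ : C ⊆ range cantorCode) (s : Set ℕ) :
    IsClosed (C ∩ cantorCode '' {U | s ⊆ U}) := by
  refine isSeqClosed_iff_isClosed.mp fun u c hu hc => ?_
  have hcC : c ∈ C := hC.mem_of_tendsto hc (Filter.Eventually.of_forall fun n => (hu n).1)
  obtain ⟨V, rfl⟩ := hCΘ hcC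
  refine ⟨hcC, V, fun m hm => ?_, rfl⟩
  obtain ⟨N, hN⟩ := Metric.tendsto_atTop.mp hc ((3 : ℝ)⁻¹ ^ (m + 1)) (by positivity)
  obtain ⟨U, hsU, hUN⟩ := (hu N).2
  have hclose := hN N le_rfl
  rw [← hUN, Real.dist_eq] at hclose
  exact (mem_iff_mem_of_abs_sub_cantorCode_lt hclose).1 (hsU hm)

lemma Ordinal.exists_fiber_cofinal_omega_one (f : Ordinal.{0} → ℕ) :
    ∃ n, ∀ β < ω₁, ∃ α, β ≤ α ∧ α < ω₁ ∧ f α = n := by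
  by_contra! h
  choose β hβ hfβ using h
  have hsup : ⨆ n, β n < ω₁ := Ordinal.iSup_lt_omega_one hβ
  exact hfβ _ _ (Ordinal.le_iSup β _) hsup rfl

namespace TreeOrder

variable {T : Type} (S : TreeOrder T)

lemma lt_trichotomy_of_lt {u v y : T} (hu : S.lt u y) (hv : S.lt v y) :
    S.lt u v ∨ u = v ∨ S.lt v u := by
  have := S.wellOrdered y
  rcases trichotomous_of (fun a b : {z // S.lt z y} => S.lt a.1 b.1) ⟨u, hu⟩ ⟨v, hv⟩ with
    h | h | h
  · exact Or.inl h
  · exact Or.inr (Or.inl (congrArg Subtype.val h))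
  · exact Or.inr (Or.inr h)

lemma exists_minimal_of_subset_below {x : T} {D : Set T} (hD : D ⊆ S.below x)
    (hne : D.Nonempty) : ∃ m ∈ D, ∀ z ∈ D, ¬ S.lt z m := by
  obtain ⟨m, hm, hmin⟩ := (S.wellOrdered x).toIsWellFounded.wf.has_min
    {z : {z // S.lt z x} | z.1 ∈ D} ⟨⟨hne.some, hD hne.some_mem⟩, hne.some_mem⟩
  exact ⟨m.1, hm, fun z hz => hmin ⟨z, hD hz⟩ hz⟩

lemma below_eq_inter_of_minimal {x y x₁ : T} (hx₁ : x₁ ∈ S.below x \ S.below y)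
    (hmin : ∀ z ∈ S.below x \ S.below y, ¬ S.lt z x₁) :
    S.below x₁ = S.below x ∩ S.below y := by
  ext z
  refine ⟨fun hz => ?_, fun ⟨hzx, hzy⟩ => ?_⟩
  · have hzx : S.lt z x := S.trans hz hx₁.1
    exact ⟨hzx, by_contra fun hzy => hmin z ⟨hzx, hzy⟩ hz⟩
  · rcases S.lt_trichotomy_of_lt hzx hx₁.1 with h | rfl | h
    · exact h
    · exact absurd hzy hx₁.2
    · exact absurd (S.trans h hzy) hx₁.2

lemma height_eq_of_below_eq {x y : T} (h : S.below x = S.below y) :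
    S.height x = S.height y := by
  have := S.wellOrdered x
  have := S.wellOrdered y
  exact Ordinal.type_eq.mpr
    ⟨RelIso.mk (Equiv.subtypeEquivRight fun z => Set.ext_iff.mp h z) Iff.rfl⟩

lemma height_eq_typein {w z : T} (h : S.lt z w) :
    S.height z = @Ordinal.typein {u // S.lt u w} (fun a b => S.lt a.1 b.1)
      (S.wellOrdered w) ⟨z, h⟩ := by
  have := S.wellOrdered w
  have := S.wellOrdered z
  rw [← Ordinal.type_subrel]
  exact Ordinal.type_eq.mpr ⟨RelIso.mk
    { toFun := fun u => ⟨⟨u.1, S.trans u.2 h⟩, u.2⟩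
      invFun := fun b => ⟨b.1.1, b.2⟩
      left_inv := fun _ => rfl
      right_inv := fun _ => rfl } Iff.rfl⟩

lemma exists_lt_height_eq {w : T} {α : Ordinal} (hα : α < S.height w) :
    ∃ z, S.lt z w ∧ S.height z = α := by
  have := S.wellOrdered w
  set z := Ordinal.enum (fun a b : {u // S.lt u w} => S.lt a.1 b.1) ⟨α, hα⟩
  exact ⟨z.1, z.2, (S.height_eq_typein z.2).trans (Ordinal.typein_enum _ _)⟩

lemma below_nonempty_of_isSuccLimit {y : T} (h : Order.IsSuccLimit (S.height y)) :
    (S.below y).Nonempty := by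
  obtain ⟨z, hz, -⟩ := S.exists_lt_height_eq h.bot_lt
  exact ⟨z, hz⟩

lemma countable_setOf_height_lt (hlev : ∀ α, (S.level α).Countable) {α : Ordinal}
    (hα : α < ω₁) : {x : T | S.height x < α}.Countable := by
  have hcard : α.card ≤ Cardinal.aleph0 := by
    rw [Cardinal.lt_omega_iff_card_lt, ← Cardinal.succ_aleph0, Order.lt_succ_iff] at hα
    exact hα
  have : Countable (Set.Iio α) := by
    rw [← Cardinal.mk_le_aleph0_iff, Cardinal.mk_Iio_ordinal, ← Cardinal.lift_aleph0.{1, 0}]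
    exact Cardinal.lift_le.mpr hcard
  have heq : {x : T | S.height x < α} = ⋃ β : Set.Iio α, S.level β.1 := by
    ext x
    simp only [mem_iUnion]
    exact ⟨fun h => ⟨⟨_, h⟩, rfl⟩, fun ⟨β, hβ⟩ => show S.height x < α from
      (hβ : S.height x = β.1) ▸ β.2⟩
  exact heq ▸ countable_iUnion fun β => hlev β.1

structure Labelling where
  label : T → ℕ
  label_ne_of_lt : ∀ {x y : T}, S.lt x y → label x ≠ label y
  eq_of_below_eq : ∀ {x y : T}, S.below x = S.below y → label x = label y → x = y

/-- Pair the index of an antichain containing `x` with an index of `x` inside its level. -/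
lemma nonempty_labelling (hlev : ∀ α, (S.level α).Countable) {A : ℕ → Set T}
    (hA : ∀ n, IsAntichain S.lt (A n)) (hcov : ⋃ n, A n = univ) : Nonempty S.Labelling := by
  have hmem : ∀ x, ∃ n, x ∈ A n := fun x => mem_iUnion.1 (hcov ▸ mem_univ x)
  choose a ha using hmem
  choose e he using fun α => countable_iff_exists_injOn.1 (hlev α)
  refine ⟨⟨fun x => Nat.pair (a x) (e (S.height x) x), fun {x y} hxy h => ?_,
    fun {x y} hb h => ?_⟩⟩
  · have hxy' : a x = a y := (Nat.pair_eq_pair.1 h).1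
    exact hA (a y) (hxy' ▸ ha x) (ha y) (by rintro rfl; exact S.irrefl x hxy) hxy
  · have hh := S.height_eq_of_below_eq hb
    have h2 := (Nat.pair_eq_pair.1 h).2
    rw [hh] at h2
    exact he _ hh rfl h2

namespace Labelling

variable {S} (L : S.Labelling)

/- Cutting off at the label of `x` keeps this set finite, so that ranks have codes; the
labels above it carry too little weight to matter for `rank_lt_rank`. -/
open Classical in
def lowLabels (x : T) : Finset ℕ :=
  (Finset.range (L.label x + 1)).filter fun m => ∃ z, (z = x ∨ S.lt z x) ∧ L.label z = m

lemma mem_lowLabels {x : T} {m : ℕ} :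
    m ∈ L.lowLabels x ↔ m ≤ L.label x ∧ ∃ z, (z = x ∨ S.lt z x) ∧ L.label z = m := by
  simp [lowLabels]

lemma label_mem_lowLabels (x : T) : L.label x ∈ L.lowLabels x :=
  L.mem_lowLabels.2 ⟨le_rfl, x, Or.inl rfl, rfl⟩

def rank (x : T) : ℝ := cantorCode ↑(L.lowLabels x)

lemma rank_lt_rank {x y : T} (h : S.lt x y) : L.rank x < L.rank y := by
  have hle : ∀ {z}, (z = x ∨ S.lt z x) → S.lt z y := by
    rintro z (rfl | hz)
    exacts [h, S.trans hz h]
  refine cantorCode_lt_cantorCode (L.label_mem_lowLabels y) (fun hy => ?_) fun m hm hmx => ?_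
  · obtain ⟨-, z, hz, hzy⟩ := L.mem_lowLabels.1 hy
    exact L.label_ne_of_lt (hle hz) hzy
  · obtain ⟨-, z, hz, rfl⟩ := L.mem_lowLabels.1 hmx
    exact L.mem_lowLabels.2 ⟨hm.le, z, Or.inr (hle hz), rfl⟩

lemma rank_ne_of_below_eq {x y : T} (hb : S.below x = S.below y) (hne : x ≠ y) :
    L.rank x ≠ L.rank y := by
  have hlabel : L.label x ≠ L.label y := fun h => hne (L.eq_of_below_eq hb h)
  wlog hlt : L.label x < L.label y generalizing x y
  · exact (this hb.symm hne.symm hlabel.symm (by omega)).symm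
  have hyx : ∀ {z}, S.lt z y → S.lt z x := fun {z} hz => (Set.ext_iff.1 hb z).2 hz
  refine (cantorCode_lt_cantorCode (L.label_mem_lowLabels x) (fun hx => ?_)
    fun m hm hmy => ?_).ne'
  · obtain ⟨-, z, rfl | hz, hzx⟩ := L.mem_lowLabels.1 hx
    · exact hlabel hzx.symm
    · exact L.label_ne_of_lt (hyx hz) hzx
  · obtain ⟨-, z, rfl | hz, rfl⟩ := L.mem_lowLabels.1 hmy
    · omega
    · exact L.mem_lowLabels.2 ⟨hm.le, z, Or.inr (hyx hz), rfl⟩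

def code (x : T) : ℕ := Encodable.encode (L.lowLabels x)

lemma rank_eq_of_code_eq {x y : T} (h : L.code x = L.code y) : L.rank x = L.rank y := by
  rw [rank, rank, Encodable.encode_injective h]

lemma code_ne_of_lt {x y : T} (h : S.lt x y) : L.code x ≠ L.code y := fun hc =>
  (L.rank_lt_rank h).ne (L.rank_eq_of_code_eq hc)

def codes (x : T) : Set ℕ := L.code '' S.below x

def psi (x : T) : ℝ := cantorCode (L.codes x)

lemma codes_subset_of_lt {x y : T} (h : S.lt x y) : L.codes x ⊆ L.codes y :=
  image_mono fun _ hz => S.trans hz h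

lemma psi_lt_psi {x y : T} (h : S.lt x y) : L.psi x < L.psi y := by
  have hnot : L.code x ∉ L.codes x := fun ⟨z, hz, hc⟩ => L.code_ne_of_lt hz hc
  have hsub : L.codes x ∪ {L.code x} ⊆ L.codes y :=
    union_subset (L.codes_subset_of_lt h) (singleton_subset_iff.2 ⟨x, h, rfl⟩)
  have := cantorCode_mono hsub
  rw [cantorCode_union (disjoint_singleton_right.2 hnot), cantorCode_singleton] at this
  exact lt_of_lt_of_le (lt_add_of_pos_right _ (cantorWeight_pos _)) this

lemma rank_le_rank_of_minimal {x y x₂ z : T} (hx₂ : S.lt x₂ y)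
    (hmin : ∀ u ∈ S.below y \ S.below x, ¬ S.lt u x₂) (hz : z ∈ S.below y \ S.below x) :
    L.rank x₂ ≤ L.rank z := by
  rcases S.lt_trichotomy_of_lt hx₂ hz.1 with h | rfl | h
  · exact (L.rank_lt_rank h).le
  · exact le_rfl
  · exact absurd h (hmin z hz)

lemma exists_rank_eq_of_code_mem {x y x₁ : T} (hx₁ : x₁ ∈ S.below x \ S.below y)
    (hmin : ∀ u ∈ S.below x \ S.below y, ¬ S.lt u x₁) (hmem : L.code x₁ ∈ L.codes y) :
    ∃ z ∈ S.below y \ S.below x, L.rank z = L.rank x₁ := by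
  obtain ⟨z, hzy, hc⟩ := hmem
  refine ⟨z, ⟨hzy, fun hzx => ?_⟩, L.rank_eq_of_code_eq hc⟩
  have hz₁ : S.lt z x₁ := by
    change z ∈ S.below x₁
    rw [S.below_eq_inter_of_minimal hx₁ hmin]
    exact ⟨hzx, hzy⟩
  exact (L.rank_lt_rank hz₁).ne (L.rank_eq_of_code_eq hc)

lemma below_eq_of_codes_eq {x y : T} (h : L.codes x = L.codes y) : S.below x = S.below y := by
  by_contra hne
  wlog hD : (S.below x \ S.below y).Nonempty generalizing x y
  · refine this h.symm (Ne.symm hne) (sdiff_nonempty.2 fun hyx => hne ?_)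
    exact Subset.antisymm (sdiff_eq_empty.1 (not_nonempty_iff_eq_empty.1 hD)) hyx
  obtain ⟨x₁, hx₁, hmin₁⟩ := S.exists_minimal_of_subset_below sdiff_subset hD
  obtain ⟨z, hz, hrz⟩ :=
    L.exists_rank_eq_of_code_mem hx₁ hmin₁ (h ▸ ⟨x₁, hx₁.1, rfl⟩)
  obtain ⟨x₂, hx₂, hmin₂⟩ := S.exists_minimal_of_subset_below sdiff_subset ⟨z, hz⟩
  obtain ⟨z', hz', hrz'⟩ :=
    L.exists_rank_eq_of_code_mem hx₂ hmin₂ (h ▸ ⟨x₂, hx₂.1, rfl⟩)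
  have h₂₁ : L.rank x₂ ≤ L.rank x₁ := hrz ▸ L.rank_le_rank_of_minimal hx₂.1 hmin₂ hz
  have h₁₂ : L.rank x₁ ≤ L.rank x₂ :=
    hrz' ▸ L.rank_le_rank_of_minimal hx₁.1 hmin₁ hz'
  have htwin : S.below x₁ = S.below x₂ := by
    rw [S.below_eq_inter_of_minimal hx₁ hmin₁, S.below_eq_inter_of_minimal hx₂ hmin₂,
      inter_comm]
  exact L.rank_ne_of_below_eq htwin (fun h => hx₁.2 (h ▸ hx₂.1)) (le_antisymm h₁₂ h₂₁)

lemma psi_ne_psi {x y : T} (h : S.below x ≠ S.below y) : L.psi x ≠ L.psi y := fun he =>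
  h (L.below_eq_of_codes_eq (cantorCode_injective he))

lemma exists_lt_forall_code_le {y : T} (hne : (S.below y).Nonempty) (M : ℕ) :
    ∃ x, S.lt x y ∧ ∀ u, S.lt u y → L.code u ≤ M → u = x ∨ S.lt u x := by
  set G := {u | S.lt u y ∧ L.code u ≤ M}
  have hG : G.Finite := by
    refine Finite.of_finite_image (f := L.code) ((finite_Iic M).subset ?_)
      fun a ha b hb hab => ?_
    · rintro _ ⟨u, hu, rfl⟩
      exact hu.2
    · by_contra hne
      rcases S.lt_trichotomy_of_lt ha.1 hb.1 with h | h | h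
      exacts [L.code_ne_of_lt h hab, hne h, L.code_ne_of_lt h hab.symm]
  rcases G.eq_empty_or_nonempty with hG₀ | hG₀
  · obtain ⟨x, hx⟩ := hne
    exact ⟨x, hx, fun u hu hM => absurd (hG₀ ▸ (⟨hu, hM⟩ : u ∈ G)) (notMem_empty u)⟩
  obtain ⟨a, ha, hmax⟩ := hG.exists_maximalFor L.rank G hG₀
  refine ⟨a, ha.1, fun u hu hM => ?_⟩
  rcases S.lt_trichotomy_of_lt hu ha.1 with h | h | h
  · exact Or.inr h
  · exact Or.inl h
  · exact absurd (hmax ⟨hu, hM⟩ (L.rank_lt_rank h).le) (not_le.2 (L.rank_lt_rank h))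

/-- Only codes above `M` separate `ψ z` from `ψ y` once `z` lies above all predecessors of `y`
with code at most `M`, and these contribute at most `3⁻¹ ^ (M + 1)`. -/
lemma exists_lt_forall_abs_psi_sub_lt {y : T} (hne : (S.below y).Nonempty) {ε : ℝ}
    (hε : 0 < ε) :
    ∃ x, S.lt x y ∧ ∀ z, S.lt x z → S.lt z y → |L.psi z - L.psi y| < ε := by
  obtain ⟨M, hM⟩ := exists_pow_lt_of_lt_one hε (by norm_num : (3 : ℝ)⁻¹ < 1)
  obtain ⟨x, hxy, hx⟩ := L.exists_lt_forall_code_le hne M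
  refine ⟨x, hxy, fun z hxz hzy => ?_⟩
  have htail : L.codes y \ L.codes z ⊆ Ici (M + 1) := by
    rintro _ ⟨⟨u, hu, rfl⟩, hnot⟩
    by_contra hle
    rcases hx u hu (by simp at hle; omega) with rfl | hux
    exacts [hnot ⟨u, hxz, rfl⟩, hnot ⟨u, S.trans hux hxz, rfl⟩]
  have hsplit : L.psi y = L.psi z + cantorCode (L.codes y \ L.codes z) := by
    rw [psi, psi, ← cantorCode_union disjoint_sdiff_right,
      union_sdiff_cancel (L.codes_subset_of_lt hzy)]
  have h₁ := cantorCode_le_of_subset_Ici htail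
  have h₂ := cantorCode_nonneg (L.codes y \ L.codes z)
  have h₃ : (3 : ℝ)⁻¹ ^ (M + 1) ≤ (3 : ℝ)⁻¹ ^ M :=
    pow_le_pow_of_le_one (by norm_num) (by norm_num) (by omega)
  rw [abs_sub_comm, abs_of_nonneg (by linarith)]
  linarith

lemma tContinuous_psi : S.TContinuous L.psi := by
  intro V hV y hy hlim
  obtain ⟨ε, hε, hball⟩ := Metric.isOpen_iff.mp hV _ hy
  obtain ⟨x, hxy, hx⟩ :=
    L.exists_lt_forall_abs_psi_sub_lt (S.below_nonempty_of_isSuccLimit hlim) hε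
  exact ⟨x, hxy, fun z h₁ h₂ =>
    hball (by rw [Metric.mem_ball, Real.dist_eq]; exact hx z h₁ h₂)⟩

lemma not_strictAnti_rank_of_forall_lt {x : T} {z : ℕ → T} (hz : ∀ k, S.lt (z k) x) :
    ¬ StrictAnti (L.rank ∘ z) := by
  intro hanti
  have hdesc : ∀ k, S.lt (z (k + 1)) (z k) := fun k => by
    have hlt : L.rank (z (k + 1)) < L.rank (z k) := hanti (Nat.lt_succ_self k)
    rcases S.lt_trichotomy_of_lt (hz (k + 1)) (hz k) with h | h | h
    · exact h
    · exact absurd (h ▸ hlt) (lt_irrefl _)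
    · exact absurd (L.rank_lt_rank h) hlt.not_gt
  have := S.wellOrdered x
  obtain ⟨k, hk⟩ := WellFounded.not_rel_apply_succ
    (r := fun a b : {u // S.lt u x} => S.lt a.1 b.1) fun k => ⟨z k, hz k⟩
  exact hk (hdesc k)

/-- The invariant of the fusion argument in `countable_of_isCompact_subset_range`. -/
def Frequent (X : Set T) (q : ℝ) (G : Finset ℕ) : Prop :=
  ∀ α < ω₁, ∃ x ∈ X, ↑G ⊆ L.codes x ∧
    ∃ w, S.lt w x ∧ α ≤ S.height w ∧ L.rank w ≤ q

lemma frequent_one_empty (hlev : ∀ α, (S.level α).Countable) {X : Set T}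
    (hX : ¬ X.Countable) : L.Frequent X 1 ∅ := by
  intro α hα
  have hα' : α + 1 < ω₁ := (Cardinal.isSuccLimit_omega 1).add_one_lt hα
  obtain ⟨x, hxX, hx⟩ := not_subset.1 fun hsub =>
    hX ((S.countable_setOf_height_lt hlev hα').mono hsub)
  obtain ⟨w, hwx, hw⟩ := S.exists_lt_height_eq (Order.add_one_le_iff.1 (not_lt.1 hx))
  refine ⟨x, hxX, by simp, w, hwx, hw.ge, ?_⟩
  simpa [rank] using cantorCode_le_of_subset_Ici (U := ↑(L.lowLabels w)) (a := 0) (by simp)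

/-- Pigeonhole over `ω₁`: some code occurs cofinally among nodes of height `α` below the
witnesses of `Frequent X q G`. -/
lemma Frequent.exists_step {X : Set T} {q : ℝ} {G : Finset ℕ} (h : L.Frequent X q G) :
    ∃ z, L.rank z < q ∧ L.Frequent X (L.rank z) (insert (L.code z) G) := by
  have hnode : ∀ α < ω₁, ∃ x ∈ X, ↑G ⊆ L.codes x ∧
      ∃ z, S.lt z x ∧ S.height z = α ∧ L.rank z < q := fun α hα => by
    obtain ⟨x, hxX, hG, w, hwx, hw, hwq⟩ :=
      h (α + 1) ((Cardinal.isSuccLimit_omega 1).add_one_lt hα)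
    obtain ⟨z, hzw, rfl⟩ := S.exists_lt_height_eq (Order.add_one_le_iff.1 hw)
    exact ⟨x, hxX, hG, z, S.trans hzw hwx, rfl, (L.rank_lt_rank hzw).trans_le hwq⟩
  have : Nonempty T := let ⟨x, _⟩ := h 0 (Cardinal.isSuccLimit_omega 1).bot_lt; ⟨x⟩
  choose! x hxX hG z hzx hz hzq using hnode
  obtain ⟨n, hn⟩ := Ordinal.exists_fiber_cofinal_omega_one fun α => L.code (z α)
  obtain ⟨α₀, -, hα₀, hn₀⟩ := hn 0 (Cardinal.isSuccLimit_omega 1).bot_lt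
  refine ⟨z α₀, hzq α₀ hα₀, fun β hβ => ?_⟩
  obtain ⟨α, hβα, hα, hnα⟩ := hn β hβ
  refine ⟨x α, hxX α hα, ?_, z α, hzx α hα, (hz α hα).ge.trans' hβα,
    (L.rank_eq_of_code_eq (hnα.trans hn₀.symm)).le⟩
  rw [Finset.coe_insert, hn₀, ← hnα]
  exact insert_subset ⟨z α, hzx α hα, rfl⟩ (hG α hα)

lemma Frequent.exists_seq {X : Set T} {q : ℝ} {G₀ : Finset ℕ} (h : L.Frequent X q G₀) :
    ∃ (G : ℕ → Finset ℕ) (z : ℕ → T), Monotone G ∧ StrictAnti (L.rank ∘ z) ∧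
      (∀ k, L.code (z k) ∈ G k) ∧ ∀ k, ∃ x ∈ X, ↑(G k) ⊆ L.codes x := by
  let P := {p : ℝ × Finset ℕ // L.Frequent X p.1 p.2}
  choose z hzq hz using fun p : P => p.2.exists_step
  let next : P → P := fun p => ⟨(L.rank (z p), insert (L.code (z p)) p.1.2), hz p⟩
  let s : ℕ → P := fun k => next^[k] ⟨(q, G₀), h⟩
  have hs : ∀ k, s (k + 1) = next (s k) := fun k => Function.iterate_succ_apply' _ _ _
  refine ⟨fun k => (s (k + 1)).1.2, fun k => z (s k), monotone_nat_of_le_succ fun k => ?_,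
    strictAnti_nat_of_succ_lt fun k => ?_, fun k => ?_, fun k => ?_⟩
  · rw [hs (k + 1)]
    exact Finset.subset_insert _ _
  · calc L.rank (z (s (k + 1))) < (s (k + 1)).1.1 := hzq _
      _ = L.rank (z (s k)) := by rw [hs k]
  · show L.code (z (s k)) ∈ (s (k + 1)).1.2
    rw [hs k]
    exact Finset.mem_insert_self _ _
  · obtain ⟨x, hxX, hG, -⟩ := (s (k + 1)).2 0 (Cardinal.isSuccLimit_omega 1).bot_lt
    exact ⟨x, hxX, hG⟩

/-- Fusion: the closed sets of points of `C` whose codes contain the `k`-th finite set of a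
sequence from `Frequent.exists_seq` meet in a point `ψ x`, and then `x` has predecessors of
strictly decreasing rank. -/
lemma countable_of_isCompact_subset_range (hlev : ∀ α, (S.level α).Countable) {C : Set ℝ}
    (hC : IsCompact C) (hCψ : C ⊆ range L.psi) : C.Countable := by
  by_contra hunc
  have hX : ¬ (L.psi ⁻¹' C).Countable := fun hX =>
    hunc ((hX.image L.psi).mono fun c hc => by
      obtain ⟨x, rfl⟩ := hCψ hc
      exact mem_image_of_mem _ hc)
  obtain ⟨G, z, hGmono, hanti, hzG, hGX⟩ := (L.frequent_one_empty hlev hX).exists_seq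
  have hCΘ : C ⊆ range cantorCode := hCψ.trans (range_subset_iff.2 fun x => ⟨_, rfl⟩)
  let Z : ℕ → Set ℝ := fun k => C ∩ cantorCode '' {U | ↑(G k) ⊆ U}
  have hZclosed : ∀ k, IsClosed (Z k) := fun k =>
    isClosed_inter_image_cantorCode hC.isClosed hCΘ _
  obtain ⟨c, hc⟩ := IsCompact.nonempty_iInter_of_sequence_nonempty_isCompact_isClosed Z
    (fun k => inter_subset_inter_right _ (image_mono fun U hU =>
      (Finset.coe_subset.2 (hGmono k.le_succ)).trans hU))
    (fun k => by
      obtain ⟨x, hxX, hx⟩ := hGX k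
      exact ⟨L.psi x, hxX, L.codes x, hx, rfl⟩)
    (hC.of_isClosed_subset (hZclosed 0) inter_subset_left) hZclosed
  obtain ⟨x, rfl⟩ := hCψ (mem_iInter.1 hc 0).1
  have hmem : ∀ k, L.code (z k) ∈ L.codes x := fun k => by
    obtain ⟨-, U, hU, hUx⟩ := mem_iInter.1 hc k
    exact cantorCode_injective hUx ▸ hU (hzG k)
  choose z' hz'x hz' using hmem
  refine L.not_strictAnti_rank_of_forall_lt hz'x ?_
  convert hanti using 1
  exact funext fun k => L.rank_eq_of_code_eq (hz' k)

end Labelling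

end TreeOrder

end

/-- For any special Aronszajn tree `T` there is `B ⊆ ℝ` with no Cantor subsets and a
continuous order preserving `ψ : T → B` with `ψ x ≠ ψ y` whenever `x↓ ≠ y↓`;
in particular `ψ` is injective whenever `T` is Hausdorff. -/
theorem build_continuous_map {T : Type} (S : TreeOrder T)
    (hS : S.IsSpecialAronszajn) :
    ∃ (B : Set ℝ) (ψ : T → ℝ),
      (¬ ∃ C : Set ℝ, C ⊆ B ∧ Nonempty (C ≃ₜ (ℕ → Bool))) ∧
      (∀ x, ψ x ∈ B) ∧ S.TContinuous ψ ∧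
      (∀ x y, S.lt x y → ψ x < ψ y) ∧
      (∀ x y, S.below x ≠ S.below y → ψ x ≠ ψ y) ∧
      ((∀ y z : T, S.below y = S.below z → y = z) → Function.Injective ψ) := by
  obtain ⟨⟨⟨-, hlev, -⟩, -⟩, A, hA, hcov⟩ := hS
  obtain ⟨L⟩ := S.nonempty_labelling hlev hA hcov
  refine ⟨range L.psi, L.psi, ?_, mem_range_self, L.tContinuous_psi,
    fun _ _ => L.psi_lt_psi, fun _ _ => L.psi_ne_psi,
    fun hH x y hxy => hH x y (not_not.1 fun h => L.psi_ne_psi h hxy)⟩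
  rintro ⟨C, hCB, ⟨φ⟩⟩
  have hcantor : ¬ Countable (ℕ → Bool) := by
    rw [← Cardinal.mk_le_aleph0_iff, not_le]
    simpa using Cardinal.aleph0_lt_continuum
  have hC : IsCompact C := isCompact_iff_compactSpace.2 φ.symm.compactSpace
  exact hcantor
    ((L.countable_of_isCompact_subset_range hlev hC hCB).to_subtype.of_equiv _ φ.toEquiv)
end

section
/- Let T be an ω₁-tree and U ⊆ T an open subset of T in the tree topology. Then U^p is open in the tree topology; in fact, for every x ∈ U^p one has x↓ ∩ U ⊆ U^p. -/
theorem IsStationaryIn.mono {A B : Set Ordinal.{0}} {κ : Ordinal.{0}} (hAB : A ⊆ B)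
    (hA : IsStationaryIn A κ) : IsStationaryIn B κ := fun C hC =>
  (hA C hC).mono (Set.inter_subset_inter_left C hAB)

namespace TreeOrder

variable {T : Type}

theorem TStationary.mono {S : TreeOrder T} {A B : Set T} (hAB : A ⊆ B)
    (hA : S.TStationary A) : S.TStationary B :=
  IsStationaryIn.mono (Set.image_mono hAB) hA

variable (S : TreeOrder T)

theorem above_subset_above {x y : T} (hyx : S.lt y x) : S.above x ⊆ S.above y :=
  fun _ hz => S.trans hyx hz

theorem below_inter_subset_prune {U : Set T} {x : T} (hx : x ∈ S.prune U) :
    S.below x ∩ U ⊆ S.prune U := fun _ ⟨hyx, hyU⟩ =>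
  ⟨hyU, hx.2.mono (Set.inter_subset_inter_left U (S.above_subset_above hyx))⟩

theorem TreeOpen.prune {U : Set T} (hU : S.TreeOpen U) : S.TreeOpen (S.prune U) := by
  intro y hy hlim
  obtain ⟨x, hxy, hxyU⟩ := hU y hy.1 hlim
  exact ⟨x, hxy, fun z hxz hzy => S.below_inter_subset_prune hy ⟨hzy, hxyU z hxz hzy⟩⟩

end TreeOrder

theorem prune_open_general {T : Type} (S : TreeOrder T)
    (U : Set T) (hU : S.TreeOpen U) :
    S.TreeOpen (S.prune U) ∧ ∀ x ∈ S.prune U, S.below x ∩ U ⊆ S.prune U :=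
  ⟨TreeOrder.TreeOpen.prune S hU, fun _ hx => S.below_inter_subset_prune hx⟩

/-- If `U` is open in the tree topology of an `ω₁`-tree, then `U^p` is open;
in fact, for every `x ∈ U^p`, `x↓ ∩ U ⊆ U^p`. -/
theorem prune_open {T : Type} (S : TreeOrder T) (hT : S.IsOmega1Tree)
    (U : Set T) (hU : S.TreeOpen U) :
    S.TreeOpen (S.prune U) ∧ ∀ x ∈ S.prune U, S.below x ∩ U ⊆ S.prune U :=
  prune_open_general S U hU
end

section
/- Let T be a special Aronszajn tree and let B ⊆ ℝ contain a subset F homeomorphic to the Cantor space 2^ω. Then there exists a continuous order preserving map ψ : T → B (continuity with respect to the tree topology). -/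
/-!
Cover `T` by antichains `A n` and give each node `x` a label `c x` with `x ∈ A (c x)`, so labels
along a chain are distinct. Send `y` to the set of labels of its predecessors, a point of the
Cantor space `ℕ → Bool`. For `x ◁ y` this set grows strictly, by the label of `x`, which no
predecessor of `x` carries; and the map is continuous for the tree topology, because each label
occurring below `y` already occurs below every node of a final segment of `y↓`. It remains to
compose with a continuous map from the Cantor space into `F` that is strictly monotone for the
lexicographic order, hence for the pointwise one; it is induced by a Cantor scheme of perfect
subsets of `F` whose left child lies entirely to the left of its right child.
-/

open Set Metric Filter CantorScheme PiNat

theorem uncountable_nat_bool : Uncountable (ℕ → Bool) :=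
  uncountable_iff_forall_not_surjective.2 fun f hf => by
    obtain ⟨n, hn⟩ := hf fun n => !f n n
    simpa using congrFun hn n

section OrderedCantorScheme

variable {K : Set ℝ}

theorem Perfect.exists_lt_of_nonempty (hK : Perfect K) (hne : K.Nonempty) :
    ∃ u ∈ K, ∃ v ∈ K, u < v := by
  obtain ⟨u, hu⟩ := hne
  obtain ⟨v, ⟨-, hv⟩, hvu⟩ := preperfect_iff_nhds.1 hK.acc u hu univ univ_mem
  rcases hvu.lt_or_gt with h | h
  exacts [⟨v, hv, u, hu, h⟩, ⟨u, hu, v, hv, h⟩]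

theorem Perfect.exists_perfect_subset_Icc (hK : Perfect K) {x : ℝ} (hx : x ∈ K) {ε : ℝ}
    (hε : 0 < ε) : ∃ L ⊆ K ∩ Icc (x - ε) (x + ε), Perfect L ∧ L.Nonempty := by
  have hxI : x ∈ Ioo (x - ε) (x + ε) := ⟨by linarith, by linarith⟩
  refine ⟨_, ?_, hK.closure_nhds_inter x hx hxI isOpen_Ioo⟩
  exact closure_minimal (fun z hz => ⟨hz.2, Ioo_subset_Icc_self hz.1⟩)
    (hK.closed.inter isClosed_Icc)

theorem ediam_le_of_subset_Icc {L : Set ℝ} {x ε δ : ℝ} (hL : L ⊆ Icc (x - ε) (x + ε))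
    (hεδ : 2 * ε ≤ δ) : ediam L ≤ ENNReal.ofReal δ :=
  (ediam_mono hL).trans <| by
    rw [Real.ediam_Icc]
    exact ENNReal.ofReal_le_ofReal (by linarith)

/-- The splitting step of the scheme: unlike `Perfect.small_diam_splitting`, the two pieces are
order-separated, which is what makes the induced map monotone. -/
theorem Perfect.exists_ordered_split (hK : Perfect K) (hne : K.Nonempty) {δ : ℝ} (hδ : 0 < δ) :
    ∃ E : Bool → Set ℝ,
      (∀ a, Perfect (E a) ∧ (E a).Nonempty ∧ E a ⊆ K ∧ ediam (E a) ≤ ENNReal.ofReal δ) ∧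
      ∀ x ∈ E false, ∀ y ∈ E true, x < y := by
  obtain ⟨u, hu, v, hv, huv⟩ := hK.exists_lt_of_nonempty hne
  set ε := min (δ / 2) ((v - u) / 3)
  have hε : 0 < ε := lt_min (by linarith) (by linarith)
  have hεδ : 2 * ε ≤ δ := by linarith [min_le_left (δ / 2) ((v - u) / 3)]
  have hεuv : 3 * ε ≤ v - u := by linarith [min_le_right (δ / 2) ((v - u) / 3)]
  obtain ⟨L₀, hL₀, hP₀, hne₀⟩ := hK.exists_perfect_subset_Icc hu hε
  obtain ⟨L₁, hL₁, hP₁, hne₁⟩ := hK.exists_perfect_subset_Icc hv hε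
  refine ⟨fun a => if a then L₁ else L₀, Bool.forall_bool.2 ⟨?_, ?_⟩, ?_⟩
  · exact ⟨hP₀, hne₀, hL₀.trans inter_subset_left,
      ediam_le_of_subset_Icc (hL₀.trans inter_subset_right) hεδ⟩
  · exact ⟨hP₁, hne₁, hL₁.trans inter_subset_left,
      ediam_le_of_subset_Icc (hL₁.trans inter_subset_right) hεδ⟩
  · intro x hx y hy
    linarith [(hL₀ hx).2.2, (hL₁ hy).2.1]

theorem Perfect.exists_ordered_cantorScheme (hK : Perfect K) (hne : K.Nonempty) :
    ∃ D : List Bool → Set ℝ, D [] = K ∧ (∀ l, Perfect (D l) ∧ (D l).Nonempty) ∧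
      CantorScheme.Antitone D ∧
      (∀ l a, ediam (D (a :: l)) ≤ ENNReal.ofReal ((1 / 2) ^ l.length)) ∧
      ∀ l, ∀ x ∈ D (false :: l), ∀ y ∈ D (true :: l), x < y := by
  choose E hE hlt using fun (L : {L : Set ℝ // Perfect L ∧ L.Nonempty}) (n : ℕ) =>
    L.2.1.exists_ordered_split L.2.2 (δ := (1 / 2) ^ n) (by positivity)
  let DP : List Bool → {L : Set ℝ // Perfect L ∧ L.Nonempty} := fun l =>
    l.rec ⟨K, hK, hne⟩ fun a l L => ⟨E L l.length a, (hE L l.length a).1, (hE L l.length a).2.1⟩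
  exact ⟨fun l => (DP l).1, rfl, fun l => (DP l).2, fun l a => (hE (DP l) l.length a).2.2.1,
    fun l a => (hE (DP l) l.length a).2.2.2, fun l => hlt (DP l) l.length⟩

theorem Perfect.exists_continuous_strictMono (hK : Perfect K) (hne : K.Nonempty) :
    ∃ φ : (ℕ → Bool) → ℝ, (∀ a, φ a ∈ K) ∧ Continuous φ ∧ StrictMono φ := by
  obtain ⟨D, hD, hDP, hanti, hdiam, hlt⟩ := hK.exists_ordered_cantorScheme hne
  have hvanish : VanishingDiam D := by
    intro x
    rw [← tendsto_add_atTop_iff_nat 1]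
    refine tendsto_of_tendsto_of_tendsto_of_le_of_le tendsto_const_nhds
      (h := fun n : ℕ => ENNReal.ofReal ((1 / 2) ^ n)) ?_ (fun _ => zero_le)
      fun n => by simpa only [res_succ, res_length] using hdiam (res x n) (x n)
    simpa using ENNReal.tendsto_ofReal
      (tendsto_pow_atTop_nhds_zero_of_lt_one (by norm_num : (0 : ℝ) ≤ 1 / 2) (by norm_num))
  have hdom : (inducedMap D).1 = univ :=
    (hanti.closureAntitone fun l => (hDP l).1.closed).map_of_vanishingDiam hvanish
      fun l => (hDP l).2
  let φ : (ℕ → Bool) → ℝ := fun a => (inducedMap D).2 ⟨a, hdom ▸ mem_univ a⟩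
  have hφ (a : ℕ → Bool) (n : ℕ) : φ a ∈ D (res a n) := map_mem _ n
  refine ⟨φ, fun a => hD ▸ hφ a 0, hvanish.map_continuous.comp (by fun_prop), fun a b hab => ?_⟩
  obtain ⟨n, hagree, hn⟩ := Pi.lex_lt_of_lt wellFounded_lt hab
  obtain ⟨ha, hb⟩ := Bool.lt_iff.1 hn
  have hres : res b n = res a n := (res_eq_res.2 hagree).symm
  exact hlt (res a n) _ (by simpa [ha] using hφ a (n + 1)) _
    (by simpa [hb, hres] using hφ b (n + 1))

end OrderedCantorScheme

namespace TreeOrder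

variable {T : Type} (S : TreeOrder T)

theorem lt_trichotomy_of_lt_s8 {a b y : T} (ha : S.lt a y) (hb : S.lt b y) :
    S.lt a b ∨ a = b ∨ S.lt b a := by
  have := S.wellOrdered y
  rcases trichotomous_of (fun a b : {z // S.lt z y} => S.lt a.1 b.1) ⟨a, ha⟩ ⟨b, hb⟩ with
    h | h | h
  exacts [Or.inl h, Or.inr (Or.inl (congrArg Subtype.val h)), Or.inr (Or.inr h)]

theorem exists_lt_of_isSuccLimit_height {y : T} (hy : Order.IsSuccLimit (S.height y)) :
    ∃ x, S.lt x y := by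
  by_contra! h
  have := S.wellOrdered y
  exact hy.ne_bot (Ordinal.type_eq_zero_iff_isEmpty.2 ⟨fun z => h z.1 z.2⟩)

/-- `TreeOpen U` says exactly that `EventuallyBelow y (· ∈ U)` for each `y ∈ U` of limit height. -/
def EventuallyBelow (y : T) (P : T → Prop) : Prop :=
  ∃ x, S.lt x y ∧ ∀ z, S.lt x z → S.lt z y → P z

variable {S}

theorem TContinuous.comp {X Y : Type} [TopologicalSpace X] [TopologicalSpace Y]
    {g : T → X} {f : X → Y} (hg : S.TContinuous g) (hf : Continuous f) : S.TContinuous (f ∘ g) :=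
  fun _ hV => hg _ (hV.preimage hf)

theorem EventuallyBelow.mono {y : T} {P Q : T → Prop} (h : S.EventuallyBelow y P)
    (hPQ : ∀ z, P z → Q z) : S.EventuallyBelow y Q :=
  let ⟨x, hxy, hx⟩ := h
  ⟨x, hxy, fun z hxz hzy => hPQ z (hx z hxz hzy)⟩

theorem EventuallyBelow.and {y : T} {P Q : T → Prop} (hP : S.EventuallyBelow y P)
    (hQ : S.EventuallyBelow y Q) : S.EventuallyBelow y fun z => P z ∧ Q z := by
  obtain ⟨x₁, hx₁y, hP⟩ := hP
  obtain ⟨x₂, hx₂y, hQ⟩ := hQ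
  rcases S.lt_trichotomy_of_lt_s8 hx₁y hx₂y with h | rfl | h
  · exact ⟨x₂, hx₂y, fun z hz hzy => ⟨hP z (S.trans h hz) hzy, hQ z hz hzy⟩⟩
  · exact ⟨x₁, hx₁y, fun z hz hzy => ⟨hP z hz hzy, hQ z hz hzy⟩⟩
  · exact ⟨x₁, hx₁y, fun z hz hzy => ⟨hP z hz hzy, hQ z (S.trans h hz) hzy⟩⟩

theorem eventuallyBelow_forall_lt {y : T} {P : ℕ → T → Prop} (hy : ∃ x, S.lt x y)
    (hP : ∀ i, S.EventuallyBelow y (P i)) (N : ℕ) :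
    S.EventuallyBelow y fun z => ∀ i < N, P i z := by
  induction N with
  | zero =>
    obtain ⟨x, hxy⟩ := hy
    exact ⟨x, hxy, fun _ _ _ i hi => absurd hi (Nat.not_lt_zero i)⟩
  | succ N ih =>
    refine (ih.and (hP N)).mono fun z hz i hi => ?_
    rcases Nat.lt_succ_iff_lt_or_eq.1 hi with hi | rfl
    exacts [hz.1 i hi, hz.2]

variable (S)

open Classical in
noncomputable def labelsBelow (c : T → ℕ) (y : T) : ℕ → Bool :=
  fun n => decide (∃ z, S.lt z y ∧ c z = n)

theorem labelsBelow_eq_true {c : T → ℕ} {y : T} {n : ℕ} :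
    S.labelsBelow c y n = true ↔ ∃ z, S.lt z y ∧ c z = n := by
  simp [labelsBelow]

theorem eventuallyBelow_labelsBelow_eq (c : T → ℕ) {y : T} (hy : ∃ x, S.lt x y) (n : ℕ) :
    S.EventuallyBelow y fun z => S.labelsBelow c z n = S.labelsBelow c y n := by
  have hbelow : ∀ z, S.lt z y → (∃ v, S.lt v z ∧ c v = n) → ∃ v, S.lt v y ∧ c v = n :=
    fun z hzy ⟨v, hvz, hv⟩ => ⟨v, S.trans hvz hzy, hv⟩
  by_cases h : ∃ w, S.lt w y ∧ c w = n
  · obtain ⟨w, hwy, hw⟩ := h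
    refine ⟨w, hwy, fun z hwz hzy => Bool.eq_iff_iff.2 ?_⟩
    simp only [labelsBelow_eq_true]
    exact ⟨hbelow z hzy, fun _ => ⟨w, hwz, hw⟩⟩
  · obtain ⟨x, hxy⟩ := hy
    refine ⟨x, hxy, fun z _ hzy => Bool.eq_iff_iff.2 ?_⟩
    simp only [labelsBelow_eq_true]
    exact ⟨hbelow z hzy, fun h' => absurd h' h⟩

theorem tContinuous_labelsBelow (c : T → ℕ) : S.TContinuous (S.labelsBelow c) := by
  intro V hV y hyV hlim
  obtain ⟨-, ⟨a, N, rfl⟩, hya, haV⟩ :=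
    (isTopologicalBasis_cylinders fun _ => Bool).exists_subset_of_mem_open hyV hV
  have hy := S.exists_lt_of_isSuccLimit_height hlim
  refine (eventuallyBelow_forall_lt hy (S.eventuallyBelow_labelsBelow_eq c hy) N).mono
    fun z hz => haV (mem_cylinder_iff.2 fun i hi => (hz i hi).trans (mem_cylinder_iff.1 hya i hi))

theorem labelsBelow_lt {c : T → ℕ} (hc : ∀ x y, S.lt x y → c x ≠ c y) {x y : T}
    (hxy : S.lt x y) : S.labelsBelow c x < S.labelsBelow c y := by
  refine Pi.lt_def.2 ⟨fun n => Bool.le_iff_imp.2 fun hn => ?_, c x, Bool.lt_iff.2 ⟨?_, ?_⟩⟩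
  · obtain ⟨z, hzx, hz⟩ := S.labelsBelow_eq_true.1 hn
    exact S.labelsBelow_eq_true.2 ⟨z, S.trans hzx hxy, hz⟩
  · exact Bool.eq_false_iff.2 fun h => by
      obtain ⟨z, hzx, hz⟩ := S.labelsBelow_eq_true.1 h
      exact hc z x hzx hz
  · exact S.labelsBelow_eq_true.2 ⟨x, hxy, rfl⟩

theorem exists_label_ne_of_antichain_cover
    (hA : ∃ A : ℕ → Set T, (∀ n, IsAntichain S.lt (A n)) ∧ ⋃ n, A n = univ) :
    ∃ c : T → ℕ, ∀ x y, S.lt x y → c x ≠ c y := by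
  obtain ⟨A, hanti, hcover⟩ := hA
  choose c hc using fun x => mem_iUnion.1 (hcover ▸ mem_univ x)
  refine ⟨c, fun x y hxy hcxy => hanti (c y) (hcxy ▸ hc x) (hc y) ?_ hxy⟩
  rintro rfl
  exact S.irrefl x hxy

end TreeOrder

/-- If `T` is a special Aronszajn tree and `B ⊆ ℝ` contains a subset `F` homeomorphic to
the Cantor space `2^ω`, then there is a continuous order preserving map `ψ : T → B`. -/
theorem continuous_map_into_cantor {T : Type} (S : TreeOrder T)
    (hS : S.IsSpecialAronszajn)
    (B F : Set ℝ) (hFB : F ⊆ B) (hF : Nonempty (F ≃ₜ (ℕ → Bool))) :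
    ∃ ψ : T → ℝ, (∀ x, ψ x ∈ B) ∧ S.TContinuous ψ ∧
      ∀ x y, S.lt x y → ψ x < ψ y := by
  obtain ⟨e⟩ := hF
  have : CompactSpace F := e.symm.compactSpace
  have : Uncountable F := @Uncountable.of_equiv _ _ uncountable_nat_bool e.symm.toEquiv
  obtain ⟨K, hK, hKne, hKF⟩ := exists_perfect_nonempty_of_isClosed_of_not_countable
    (isCompact_iff_compactSpace.2 ‹_›).isClosed (Set.countable_coe_iff.not.1 not_countable)
  obtain ⟨φ, hφK, hφc, hφm⟩ := hK.exists_continuous_strictMono hKne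
  obtain ⟨c, hc⟩ := S.exists_label_ne_of_antichain_cover hS.2
  exact ⟨φ ∘ S.labelsBelow c, fun x => hFB (hKF (hφK _)), (S.tContinuous_labelsBelow c).comp hφc,
    fun x y hxy => hφm (S.labelsBelow_lt hc hxy)⟩
end

section
/- An ω₁-tree T is special (i.e., a countable union of antichains) if and only if there exists an order preserving map φ : T → ℚ. -/
/-!
A countable union of antichains is the same as a colouring `c : T → ℕ` that separates comparable
nodes. Given such a colouring, send `x` to `∑ 2⁻ⁿ` over the colours `n ≤ c x` occurring on the
branch up to `x`. If `x ◁ y` and `m = c y`, then `m` occurs on the branch of `y` but not on that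
of `x`, while every smaller colour of `x`'s branch also occurs on `y`'s; as in comparing binary
expansions, the first difference decides, so the value at `x` is smaller. Conversely, an order
preserving `φ : T → ℚ` is itself such a colouring, `ℚ` being countable.
-/

open Finset

section GeomSum

variable {K : Type*} [Field K] [LinearOrder K] [IsStrictOrderedRing K]

theorem sum_inv_two_pow_lt_of_forall_lt {s : Finset ℕ} {m : ℕ} (hs : ∀ n ∈ s, m < n) :
    ∑ n ∈ s, (2⁻¹ : K) ^ n < 2⁻¹ ^ m := by
  set N := m + 1 + s.sup id
  have hsub : s ⊆ Ico (m + 1) N := fun n hn =>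
    mem_Ico.2 ⟨hs n hn, by have : n ≤ s.sup id := le_sup (f := id) hn; omega⟩
  calc ∑ n ∈ s, (2⁻¹ : K) ^ n
      ≤ ∑ n ∈ Ico (m + 1) N, (2⁻¹ : K) ^ n :=
        sum_le_sum_of_subset_of_nonneg hsub fun _ _ _ => by positivity
    _ = 2⁻¹ ^ m - 2 * 2⁻¹ ^ N := by
        rw [geom_sum_Ico' (by norm_num) (by omega), pow_succ]
        ring
    _ < 2⁻¹ ^ m := sub_lt_self _ (by positivity)

theorem sum_inv_two_pow_lt_of_first_difference {E F : Finset ℕ} {m : ℕ}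
    (hlt : ∀ n ∈ E, n < m → n ∈ F) (hmE : m ∉ E) (hmF : m ∈ F) :
    ∑ n ∈ E, (2⁻¹ : K) ^ n < ∑ n ∈ F, (2⁻¹ : K) ^ n := by
  have hlarge : ∀ n ∈ E.filter (¬ · < m), m < n := fun n hn => by
    obtain ⟨hnE, hnm⟩ := mem_filter.1 hn
    exact lt_of_le_of_ne (not_lt.1 hnm) fun h => hmE (h ▸ hnE)
  have hsmall : E.filter (· < m) ⊆ F.filter (· < m) := fun n hn => by
    obtain ⟨hnE, hnm⟩ := mem_filter.1 hn
    exact mem_filter.2 ⟨hlt n hnE hnm, hnm⟩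
  rw [← sum_filter_add_sum_filter_not E (· < m)]
  calc ∑ n ∈ E.filter (· < m), (2⁻¹ : K) ^ n + ∑ n ∈ E.filter (¬ · < m), (2⁻¹ : K) ^ n
      < ∑ n ∈ E.filter (· < m), (2⁻¹ : K) ^ n + 2⁻¹ ^ m := by
        gcongr
        exact sum_inv_two_pow_lt_of_forall_lt hlarge
    _ ≤ ∑ n ∈ F.filter (· < m), (2⁻¹ : K) ^ n + 2⁻¹ ^ m := by gcongr
    _ = ∑ n ∈ insert m (F.filter (· < m)), (2⁻¹ : K) ^ n := by
        rw [sum_insert (by simp), add_comm]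
    _ ≤ ∑ n ∈ F, (2⁻¹ : K) ^ n :=
        sum_le_sum_of_subset_of_nonneg (insert_subset hmF (filter_subset _ _))
          fun _ _ _ => by positivity

end GeomSum

section Coloring

variable {α : Type*} (r : α → α → Prop)

theorem exists_antichain_cover_iff_exists_coloring [Std.Irrefl r] :
    (∃ A : ℕ → Set α, (∀ n, IsAntichain r (A n)) ∧ (⋃ n, A n) = Set.univ) ↔
    ∃ c : α → ℕ, ∀ x y, r x y → c x ≠ c y := by
  constructor
  · rintro ⟨A, hA, hcover⟩
    have hmem : ∀ x, ∃ n, x ∈ A n := fun x => Set.mem_iUnion.1 (hcover ▸ Set.mem_univ x)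
    choose c hc using hmem
    refine ⟨c, fun x y hxy hcxy => ?_⟩
    have hy : y ∈ A (c x) := hcxy ▸ hc y
    exact hA (c x) (hc x) hy (ne_of_irrefl hxy) hxy
  · rintro ⟨c, hc⟩
    refine ⟨fun n => c ⁻¹' {n}, fun n x hx y hy _ hxy => hc x y hxy (hx.trans hy.symm), ?_⟩
    exact Set.eq_univ_of_forall fun x => Set.mem_iUnion.2 ⟨c x, rfl⟩

open Classical in
noncomputable def colorsBelow (c : α → ℕ) (x : α) : Finset ℕ :=
  (range (c x + 1)).filter fun n => ∃ z, (z = x ∨ r z x) ∧ c z = n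

theorem mem_colorsBelow {c : α → ℕ} {x : α} {n : ℕ} :
    n ∈ colorsBelow r c x ↔ n ≤ c x ∧ ∃ z, (z = x ∨ r z x) ∧ c z = n := by
  simp [colorsBelow]

variable [IsTrans α r]

theorem sum_colorsBelow_lt {c : α → ℕ} (hc : ∀ x y, r x y → c x ≠ c y) {x y : α}
    (hxy : r x y) :
    ∑ n ∈ colorsBelow r c x, (2⁻¹ : ℚ) ^ n < ∑ n ∈ colorsBelow r c y, (2⁻¹ : ℚ) ^ n := by
  have below_y : ∀ z, z = x ∨ r z x → r z y := by
    rintro z (rfl | hzx)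
    exacts [hxy, _root_.trans hzx hxy]
  apply sum_inv_two_pow_lt_of_first_difference (m := c y)
  · intro n hn hny
    obtain ⟨-, z, hz, rfl⟩ := (mem_colorsBelow r).1 hn
    exact (mem_colorsBelow r).2 ⟨hny.le, z, Or.inr (below_y z hz), rfl⟩
  · intro hm
    obtain ⟨-, z, hz, hzy⟩ := (mem_colorsBelow r).1 hm
    exact hc z y (below_y z hz) hzy
  · exact (mem_colorsBelow r).2 ⟨le_rfl, y, Or.inl rfl, rfl⟩

theorem exists_strictMono_rat_iff_exists_coloring :
    (∃ φ : α → ℚ, ∀ x y, r x y → φ x < φ y) ↔ ∃ c : α → ℕ, ∀ x y, r x y → c x ≠ c y := by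
  constructor
  · rintro ⟨φ, hφ⟩
    exact ⟨fun x => Encodable.encode (φ x), fun x y hxy h =>
      (hφ x y hxy).ne (Encodable.encode_injective h)⟩
  · rintro ⟨c, hc⟩
    exact ⟨fun x => ∑ n ∈ colorsBelow r c x, (2⁻¹ : ℚ) ^ n,
      fun x y hxy => sum_colorsBelow_lt r hc hxy⟩

end Coloring

theorem special_iff_rational_map_general {T : Type} (S : TreeOrder T) :
    (∃ A : ℕ → Set T, (∀ n, IsAntichain S.lt (A n)) ∧ (⋃ n, A n) = Set.univ) ↔
    ∃ φ : T → ℚ, ∀ x y, S.lt x y → φ x < φ y := by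
  have : Std.Irrefl S.lt := ⟨S.irrefl⟩
  have : IsTrans T S.lt := ⟨fun _ _ _ => S.trans⟩
  rw [exists_antichain_cover_iff_exists_coloring, exists_strictMono_rat_iff_exists_coloring]

/-- An `ω₁`-tree is special (a countable union of antichains) iff there is an order
preserving map `φ : T → ℚ`. -/
theorem special_iff_rational_map {T : Type} (S : TreeOrder T)
    (hT : S.IsOmega1Tree) :
    (∃ A : ℕ → Set T, (∀ n, IsAntichain S.lt (A n)) ∧ (⋃ n, A n) = Set.univ) ↔
    ∃ φ : T → ℚ, ∀ x y, S.lt x y → φ x < φ y :=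
  special_iff_rational_map_general S
end

section
/- Let T be an ω₁-tree admitting an order preserving map φ : T → ℝ. Then T has no uncountable chains; that is, T is an Aronszajn tree. -/
/-!
A tree is well-founded, so a chain `C` in it is well-ordered, and an order preserving
`φ : T → ℝ` maps `C` order-isomorphically onto a well-ordered subset of `ℝ`. Every element of
such a subset other than its maximum has an immediate successor in it, and the resulting
intervals between consecutive elements are disjoint and open, hence countably many.
-/

theorem TreeOrder.wellFounded {T : Type} (S : TreeOrder T) : WellFounded S.lt := by
  refine ⟨fun x => ⟨x, fun y hyx => ?_⟩⟩
  have accBelow : ∀ y : {y // S.lt y x}, Acc S.lt y.1 := fun y =>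
    (S.wellOrdered x).toIsWellFounded.wf.induction (C := fun y => Acc S.lt y.1) y fun y ih =>
      ⟨y.1, fun z hzy => ih ⟨z, S.trans hzy y.2⟩ hzy⟩
  exact accBelow ⟨y, hyx⟩

theorem Set.IsWF.countable {α : Type*} [LinearOrder α] [TopologicalSpace α] [OrderTopology α]
    [SecondCountableTopology α] {s : Set α} (hs : s.IsWF) : s.Countable := by
  have hSucc : {x ∈ s | ∃ y ∈ s, x < y} ⊆ {x ∈ s | ∃ z, x < z ∧ ∀ y ∈ s, x < y → z ≤ y} := by
    rintro x ⟨hx, hNonmax⟩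
    have hAbove : (s ∩ Ioi x).Nonempty := hNonmax.imp fun _ ⟨hy, hxy⟩ => ⟨hy, hxy⟩
    have hsx : (s ∩ Ioi x).IsWF := hs.mono inter_subset_left
    exact ⟨hx, hsx.min hAbove, (hsx.min_mem hAbove).2,
      fun y hy hxy => hsx.min_le hAbove ⟨hy, hxy⟩⟩
  have hMax : {x ∈ s | ∀ y ∈ s, ¬ x < y}.Subsingleton := fun x ⟨hx, hxMax⟩ y ⟨hy, hyMax⟩ =>
    le_antisymm (not_lt.1 (hyMax x hx)) (not_lt.1 (hxMax y hy))
  refine (((countable_image_lt_image_Ioi_within s id).mono hSucc).union hMax.countable).mono ?_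
  intro x hx
  by_cases h : ∃ y ∈ s, x < y
  · exact Or.inl ⟨hx, h⟩
  · exact Or.inr ⟨hx, fun y hy hxy => h ⟨y, hy, hxy⟩⟩

theorem IsChain.countable_of_wellFoundedOn {β α : Type*} [LinearOrder α] [TopologicalSpace α]
    [OrderTopology α] [SecondCountableTopology α] {r : β → β → Prop} {C : Set β}
    (hC : IsChain r C) (hwf : C.WellFoundedOn r) {f : β → α}
    (hf : ∀ x ∈ C, ∀ y ∈ C, r x y → f x < f y) : C.Countable := by
  have hInj : Set.InjOn f C := fun a ha b hb hab => by
    by_contra hne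
    rcases hC ha hb hne with h | h
    · exact (hf a ha b hb h).ne hab
    · exact (hf b hb a ha h).ne hab.symm
  have hReflect : ∀ a ∈ C, ∀ b ∈ C, f a < f b → r a b := fun a ha b hb hab =>
    (hC ha hb (ne_of_apply_ne f hab.ne)).resolve_right fun h => (hf b hb a ha h).not_gt hab
  have hImage : (f '' C).IsWF := Set.wellFoundedOn_image.2 (hwf.mono' hReflect)
  exact (Set.mapsTo_image f C).countable_of_injOn hInj hImage.countable

/-- An `ω₁`-tree admitting an order preserving map into `ℝ` has no uncountable chains,
i.e. it is an Aronszajn tree. -/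
theorem aronszajn_of_order_preserving {T : Type} (S : TreeOrder T)
    (hT : S.IsOmega1Tree) (φ : T → ℝ) (hφ : ∀ x y, S.lt x y → φ x < φ y) :
    S.IsAronszajn :=
  ⟨hT, fun _ hC => hC.countable_of_wellFoundedOn S.wellFounded.wellFoundedOn
    fun x _ y _ => hφ x y⟩
end
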